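/- arXiv:2111.02933 — 2 statements merged into one kernel-verified Lean document; each statement's English description precedes it below -/
import Mathlib

section
/- Fix c > 1 and θ > 1. Let X > 1, Δ₁ = exp(π·⌊(log X)/π⌋ + arctan 1), Δ₂ = exp(π·⌊(log X)/π⌋ + arctan 2). Then there exist positive constants A, B depending only on c and θ such that for all y ∈ [Δ₁, Δ₂], A · X^{c-1} ≤ y^{c-1}·tan(log y)^{θ-1}·(c·tan(log y) + θ·sec(log y)^2) ≤ B · X^{c-1}. In particular the derivative of y ↦ y^c·tan(log y)^θ is of exact order X^{c-1} on [Δ₁, Δ₂]. -/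
open Real

theorem derivative_order_of_magnitude (c θ : ℝ) (hc : 1 < c) (hθ : 1 < θ) :
    ∃ A B : ℝ, 0 < A ∧ 0 < B ∧
      ∀ X : ℝ, 1 < X →
        ∀ y ∈ Set.Icc (Real.exp (Real.pi * (⌊Real.log X / Real.pi⌋ : ℝ) + Real.arctan 1))
            (Real.exp (Real.pi * (⌊Real.log X / Real.pi⌋ : ℝ) + Real.arctan 2)),
          A * X ^ (c - 1) ≤
            y ^ (c - 1) * Real.tan (Real.log y) ^ (θ - 1) *
              (c * Real.tan (Real.log y) + θ * ((Real.cos (Real.log y))⁻¹) ^ 2) ∧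
          y ^ (c - 1) * Real.tan (Real.log y) ^ (θ - 1) *
              (c * Real.tan (Real.log y) + θ * ((Real.cos (Real.log y))⁻¹) ^ 2) ≤
            B * X ^ (c - 1) := by
  refine ⟨Real.exp (-((c - 1) * Real.pi)) * (c + 2 * θ),
    Real.exp ((c - 1) * (Real.pi / 2)) * (2 : ℝ) ^ (θ - 1) * (2 * c + 5 * θ),
    by positivity, by positivity, ?_⟩
  intro X hX y hy
  obtain ⟨hy1, hy2⟩ := hy
  have hπ : (0 : ℝ) < Real.pi := Real.pi_pos
  set k : ℝ := (⌊Real.log X / Real.pi⌋ : ℝ) with hkdef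
  have hy0 : 0 < y := lt_of_lt_of_le (Real.exp_pos _) hy1
  set L := Real.log y with hLdef
  have hL1 : Real.pi * k + Real.arctan 1 ≤ L := by
    have := Real.log_le_log (Real.exp_pos _) hy1
    rwa [Real.log_exp] at this
  have hL2 : L ≤ Real.pi * k + Real.arctan 2 := by
    have := Real.log_le_log hy0 hy2
    rwa [Real.log_exp] at this
  -- tangent via periodicity
  set t := L - k * Real.pi with htdef
  have htan : Real.tan L = Real.tan t := by
    have h := (Real.tan_periodic.int_mul ⌊Real.log X / Real.pi⌋) t
    rw [← h]
    congr 1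
    rw [htdef, show ((⌊Real.log X / Real.pi⌋ : ℤ) : ℝ) = k from hkdef.symm]
    ring
  have ht1 : Real.arctan 1 ≤ t := by rw [htdef]; linarith
  have ht2 : t ≤ Real.arctan 2 := by rw [htdef]; linarith
  have hmem1 : Real.arctan 1 ∈ Set.Ioo (-(Real.pi / 2)) (Real.pi / 2) :=
    ⟨Real.neg_pi_div_two_lt_arctan 1, Real.arctan_lt_pi_div_two 1⟩
  have hmem2 : Real.arctan 2 ∈ Set.Ioo (-(Real.pi / 2)) (Real.pi / 2) :=
    ⟨Real.neg_pi_div_two_lt_arctan 2, Real.arctan_lt_pi_div_two 2⟩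
  have hmemt : t ∈ Set.Ioo (-(Real.pi / 2)) (Real.pi / 2) :=
    ⟨lt_of_lt_of_le hmem1.1 ht1, lt_of_le_of_lt ht2 hmem2.2⟩
  have hT1 : 1 ≤ Real.tan L := by
    rw [htan, ← Real.tan_arctan 1]
    exact Real.strictMonoOn_tan.monotoneOn hmem1 hmemt ht1
  have hT2 : Real.tan L ≤ 2 := by
    rw [htan, ← Real.tan_arctan 2]
    exact Real.strictMonoOn_tan.monotoneOn hmemt hmem2 ht2
  -- secant
  have hcos : Real.cos L ≠ 0 := by
    intro h
    have : Real.tan L = 0 := by rw [Real.tan_eq_sin_div_cos, h, div_zero]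
    linarith
  have hsec : ((Real.cos L)⁻¹) ^ 2 = 1 + Real.tan L ^ 2 := by
    have h := Real.inv_one_add_tan_sq hcos
    have h2 : (0:ℝ) < 1 + Real.tan L ^ 2 := by positivity
    field_simp at h ⊢
    linear_combination h
  -- power of y
  have hkup : Real.pi * k ≤ Real.log X := by
    have := Int.floor_le (Real.log X / Real.pi)
    rw [← hkdef] at this
    have h1 : Real.pi * k ≤ Real.pi * (Real.log X / Real.pi) := by nlinarith
    have h2 : Real.pi * (Real.log X / Real.pi) = Real.log X := by
      field_simp
    linarith
  have hklo : Real.log X - Real.pi < Real.pi * k := by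
    have := Int.sub_one_lt_floor (Real.log X / Real.pi)
    rw [← hkdef] at this
    have h2 : Real.pi * (Real.log X / Real.pi - 1) < Real.pi * k := by nlinarith
    have h3 : Real.log X - Real.pi = Real.pi * (Real.log X / Real.pi - 1) := by
      field_simp
    linarith
  have hLlo : Real.log X - Real.pi ≤ L := by
    have h4 : (0:ℝ) ≤ Real.arctan 1 := by
      rw [Real.arctan_one]; positivity
    linarith
  have hLhi : L ≤ Real.log X + Real.pi / 2 := by
    have := (Real.arctan_lt_pi_div_two 2).le
    linarith
  have hc1 : (0:ℝ) ≤ c - 1 := by linarith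
  have hE_lo : Real.exp (-((c - 1) * Real.pi)) * X ^ (c - 1) ≤ y ^ (c - 1) := by
    rw [Real.rpow_def_of_pos hy0, Real.rpow_def_of_pos (by linarith : (0:ℝ) < X),
      ← Real.exp_add]
    apply Real.exp_le_exp.mpr
    nlinarith
  have hE_hi : y ^ (c - 1) ≤ Real.exp ((c - 1) * (Real.pi / 2)) * X ^ (c - 1) := by
    rw [Real.rpow_def_of_pos hy0, Real.rpow_def_of_pos (by linarith : (0:ℝ) < X),
      ← Real.exp_add]
    apply Real.exp_le_exp.mpr
    nlinarith
  -- tan power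
  have hP1 : (1:ℝ) ≤ Real.tan L ^ (θ - 1) := Real.one_le_rpow hT1 (by linarith)
  have hP2 : Real.tan L ^ (θ - 1) ≤ (2:ℝ) ^ (θ - 1) :=
    Real.rpow_le_rpow (by linarith) hT2 (by linarith)
  -- bracket
  have hsq1 : 1 ≤ Real.tan L ^ 2 := by
    have h := pow_le_pow_left₀ (by norm_num : (0:ℝ) ≤ 1) hT1 2
    simpa using h
  have hsq2 : Real.tan L ^ 2 ≤ 4 := by
    have h := pow_le_pow_left₀ (by linarith : (0:ℝ) ≤ Real.tan L) hT2 2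
    norm_num at h
    linarith
  have hc0 : (0:ℝ) ≤ c := by linarith
  have hθ0 : (0:ℝ) ≤ θ := by linarith
  have hm1 : c * 1 ≤ c * Real.tan L := mul_le_mul_of_nonneg_left hT1 hc0
  have hm2 : θ * 2 ≤ θ * (1 + Real.tan L ^ 2) :=
    mul_le_mul_of_nonneg_left (by linarith) hθ0
  have hm3 : c * Real.tan L ≤ c * 2 := mul_le_mul_of_nonneg_left hT2 hc0
  have hm4 : θ * (1 + Real.tan L ^ 2) ≤ θ * 5 :=
    mul_le_mul_of_nonneg_left (by linarith) hθ0
  have hBr1 : c + 2 * θ ≤ c * Real.tan L + θ * ((Real.cos L)⁻¹) ^ 2 := by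
    rw [hsec]; linarith
  have hBr2 : c * Real.tan L + θ * ((Real.cos L)⁻¹) ^ 2 ≤ 2 * c + 5 * θ := by
    rw [hsec]; linarith
  have hXpos : (0:ℝ) < X ^ (c - 1) := Real.rpow_pos_of_pos (by linarith) _
  have hypos : (0:ℝ) < y ^ (c - 1) := Real.rpow_pos_of_pos hy0 _
  constructor
  · have step1 : (Real.exp (-((c - 1) * Real.pi)) * X ^ (c - 1)) * 1 ≤
        y ^ (c - 1) * Real.tan L ^ (θ - 1) :=
      mul_le_mul hE_lo hP1 (by norm_num) (le_of_lt hypos)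
    have step2 : (Real.exp (-((c - 1) * Real.pi)) * X ^ (c - 1)) * 1 * (c + 2 * θ) ≤
        y ^ (c - 1) * Real.tan L ^ (θ - 1) *
          (c * Real.tan L + θ * ((Real.cos L)⁻¹) ^ 2) :=
      mul_le_mul step1 hBr1 (by linarith) (by positivity)
    calc Real.exp (-((c - 1) * Real.pi)) * (c + 2 * θ) * X ^ (c - 1)
        = (Real.exp (-((c - 1) * Real.pi)) * X ^ (c - 1)) * 1 * (c + 2 * θ) := by ring
      _ ≤ _ := step2
  · have step1 : y ^ (c - 1) * Real.tan L ^ (θ - 1) ≤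
        (Real.exp ((c - 1) * (Real.pi / 2)) * X ^ (c - 1)) * (2:ℝ) ^ (θ - 1) :=
      mul_le_mul hE_hi hP2 (by positivity) (by positivity)
    have step2 : y ^ (c - 1) * Real.tan L ^ (θ - 1) *
          (c * Real.tan L + θ * ((Real.cos L)⁻¹) ^ 2) ≤
        (Real.exp ((c - 1) * (Real.pi / 2)) * X ^ (c - 1)) * (2:ℝ) ^ (θ - 1)
            * (2 * c + 5 * θ) :=
      mul_le_mul step1 hBr2 (by positivity) (by positivity)
    calc y ^ (c - 1) * Real.tan L ^ (θ - 1) *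
          (c * Real.tan L + θ * ((Real.cos L)⁻¹) ^ 2)
        ≤ (Real.exp ((c - 1) * (Real.pi / 2)) * X ^ (c - 1)) * (2:ℝ) ^ (θ - 1)
            * (2 * c + 5 * θ) := step2
      _ = Real.exp ((c - 1) * (Real.pi / 2)) * (2:ℝ) ^ (θ - 1) * (2 * c + 5 * θ)
          * X ^ (c - 1) := by ring
end

section
/- Fix 1 < c < 23/21, θ > 1, and let τ = X^{1-c-ε} for a small fixed ε > 0. With Θ(α) as in the paper's setup, ∫_{τ ≤ |α| ≤ 1/2} |Θ(α)|³ dα ≪ X^{3-c-ε'}, for some ε' > 0 depending on ε; in particular it suffices to show |Θ(α)| ≪ |α|^{-1/c} for τ ≤ |α| ≤ 1/2. -/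
open Real MeasureTheory

noncomputable def e (t : ℝ) : ℂ := Complex.exp (2 * Real.pi * Complex.I * t)

/-!
The weights `w m = y'(m)` are nonnegative, bounded by `Δ₁ ^ (1 - c) ≍ X ^ (1 - c)` and
decreasing in `m`: `y` is increasing because it inverts the increasing phase `u ^ c tan (log u) ^ θ`
(on `[Δ₁, Δ₂]` the angle `log u` stays in a branch where `tan ≥ 1` increases), and the derivative of
the phase increases with `u`. Abel summation against `|∑ e(mα)| ≤ 1 / (2|α|)` then gives
`|Θ α| ≪ X ^ (1 - c) / |α| ≤ X ^ ε` for `τ ≤ |α| ≤ 1/2`, and the cube integrates over a set of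
measure at most one to `≪ X ^ (3ε) = X ^ (3 - c - ε')` with `ε' = 3 - c - 3ε > 0`.
-/

lemma monotoneOn_tan_Icc_add (k : ℤ) {a b : ℝ} (ha : -(π / 2) < a) (hb : b < π / 2) :
    MonotoneOn tan (Set.Icc (π * k + a) (π * k + b)) := by
  intro x hx y hy hxy
  rw [← tan_sub_int_mul_pi x k, ← tan_sub_int_mul_pi y k]
  refine strictMonoOn_tan.monotoneOn ⟨?_, ?_⟩ ⟨?_, ?_⟩ (by linarith) <;>
    linarith [hx.1, hx.2, hy.1, hy.2]

lemma one_le_tan_of_mem_Icc (k : ℤ) {b x : ℝ} (hb : b < π / 2)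
    (hx : x ∈ Set.Icc (π * k + π / 4) (π * k + b)) : 1 ≤ tan x := by
  have hπ := pi_pos
  have hle : π * k + π / 4 ≤ π * k + b := hx.1.trans hx.2
  calc (1 : ℝ) = tan (π * k + π / 4) := by
        rw [add_comm, mul_comm, tan_add_int_mul_pi, tan_pi_div_four]
    _ ≤ tan x := monotoneOn_tan_Icc_add k (by linarith) hb ⟨le_rfl, hle⟩ hx hx.1

lemma log_mem_Icc_of_mem_Icc_exp {x y u : ℝ} (hu : u ∈ Set.Icc (exp x) (exp y)) :
    log u ∈ Set.Icc x y := by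
  have hu₀ : 0 < u := (exp_pos x).trans_le hu.1
  exact ⟨(le_log_iff_exp_le hu₀).2 hu.1, (log_le_iff_le_exp hu₀).2 hu.2⟩

lemma StrictMonoOn.monotoneOn_of_leftInvOn {α β : Type*} [LinearOrder α] [Preorder β]
    {g : α → β} {f : β → α} {s : Set α} {t : Set β} (hg : StrictMonoOn g s)
    (hf : Set.MapsTo f t s) (hgf : Set.LeftInvOn g f t) : MonotoneOn f t :=
  fun a ha b hb hab => (hg.le_iff_le (hf ha) (hf hb)).1 (by rwa [hgf ha, hgf hb])

lemma Int.cast_mem_Icc_of_mem_Ioc_floor {A B : ℝ} {m : ℤ} (hm : m ∈ Finset.Ioc ⌊A⌋ ⌊B⌋) :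
    (m : ℝ) ∈ Set.Icc A B := by
  rw [Finset.mem_Ioc] at hm
  exact ⟨(Int.floor_lt.1 hm.1).le, Int.le_floor.1 hm.2⟩

lemma inv_cos_sq_eq_one_add_tan_sq {x : ℝ} (hx : tan x ≠ 0) :
    (cos x)⁻¹ ^ 2 = 1 + tan x ^ 2 := by
  have hcos : cos x ≠ 0 := fun h => hx (by rw [tan_eq_sin_div_cos, h, div_zero])
  rw [inv_pow, ← inv_one_add_tan_sq hcos, inv_inv]

noncomputable def phase (c θ u : ℝ) : ℝ := u ^ c * tan (log u) ^ θ

/-- `phaseWeight c θ (y t) = y'(t)` when `y` inverts `phase c θ`. -/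
noncomputable def phaseWeight (c θ u : ℝ) : ℝ :=
  u ^ (1 - c) / ((c * tan (log u) + θ * ((cos (log u))⁻¹) ^ 2) * tan (log u) ^ (θ - 1))

noncomputable def phaseDenom (c θ T : ℝ) : ℝ := (c * T + θ * (1 + T ^ 2)) * T ^ (θ - 1)

lemma phaseWeight_eq {c θ u : ℝ} (h : tan (log u) ≠ 0) :
    phaseWeight c θ u = u ^ (1 - c) / phaseDenom c θ (tan (log u)) := by
  rw [phaseWeight, phaseDenom, inv_cos_sq_eq_one_add_tan_sq h]

lemma one_le_phaseDenom {c θ T : ℝ} (hc : 0 ≤ c) (hθ : 1 ≤ θ) (hT : 1 ≤ T) :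
    1 ≤ phaseDenom c θ T := by
  have h₁ : 1 ≤ c * T + θ * (1 + T ^ 2) := by nlinarith
  have h₂ : 1 ≤ T ^ (θ - 1) := one_le_rpow hT (by linarith)
  exact one_le_mul_of_one_le_of_one_le h₁ h₂

lemma phaseDenom_le_phaseDenom {c θ T T' : ℝ} (hc : 0 ≤ c) (hθ : 1 ≤ θ) (hT : 0 ≤ T)
    (hTT' : T ≤ T') : phaseDenom c θ T ≤ phaseDenom c θ T' := by
  have hT' : 0 ≤ T' := hT.trans hTT'
  unfold phaseDenom
  gcongr

lemma Finset.sum_Ioc_add_one_right {M : Type*} [AddCommMonoid M] {a b : ℤ} (h : a ≤ b)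
    (f : ℤ → M) : ∑ m ∈ Finset.Ioc a (b + 1), f m = ∑ m ∈ Finset.Ioc a b, f m + f (b + 1) := by
  rw [← Finset.insert_Ioc_right_eq_Ioc_add_one h, Finset.sum_insert (by simp), add_comm]

theorem norm_sum_Ioc_smul_le_of_antitoneOn {E : Type*} [SeminormedAddCommGroup E]
    [NormedSpace ℝ E] {a b : ℤ} {w : ℤ → ℝ} {z : ℤ → E} {B M : ℝ}
    (hw₀ : ∀ m ∈ Finset.Ioc a b, 0 ≤ w m) (hwB : ∀ m ∈ Finset.Ioc a b, w m ≤ B)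
    (hw : AntitoneOn w (Finset.Ioc a b)) (hB : 0 ≤ B)
    (hz : ∀ n, ‖∑ m ∈ Finset.Ioc a n, z m‖ ≤ M) :
    ‖∑ m ∈ Finset.Ioc a b, w m • z m‖ ≤ B * M := by
  have hM : 0 ≤ M := by simpa using hz a
  rcases lt_or_ge b a with hba | hab
  · simpa [Finset.Ioc_eq_empty_of_le hba.le] using mul_nonneg hB hM
  induction b, hab using Int.leInduction generalizing w B with
  | base => simpa using mul_nonneg hB hM
  | succ b hab ih =>
    have hsub : Finset.Ioc a b ⊆ Finset.Ioc a (b + 1) := Finset.Ioc_subset_Ioc_right (by omega)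
    have hlast : b + 1 ∈ Finset.Ioc a (b + 1) := Finset.mem_Ioc.2 ⟨by omega, le_rfl⟩
    -- Abel summation, one step: split off the smallest weight `w (b + 1)` from every term.
    have hsplit : ∑ m ∈ Finset.Ioc a (b + 1), w m • z m =
        w (b + 1) • ∑ m ∈ Finset.Ioc a (b + 1), z m +
          ∑ m ∈ Finset.Ioc a b, (w m - w (b + 1)) • z m := by
      rw [Finset.sum_Ioc_add_one_right hab, Finset.sum_Ioc_add_one_right hab, smul_add,
        Finset.smul_sum]
      simp only [sub_smul, Finset.sum_sub_distrib]
      abel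
    have hrest : ‖∑ m ∈ Finset.Ioc a b, (w m - w (b + 1)) • z m‖ ≤ (B - w (b + 1)) * M :=
      ih (fun m hm => sub_nonneg.2 (hw (hsub hm) hlast (by linarith [(Finset.mem_Ioc.1 hm).2])))
        (fun m hm => sub_le_sub_right (hwB m (hsub hm)) _)
        (fun m hm m' hm' hmm' => sub_le_sub_right (hw (hsub hm) (hsub hm') hmm') _)
        (sub_nonneg.2 (hwB _ hlast))
    calc ‖∑ m ∈ Finset.Ioc a (b + 1), w m • z m‖
        ≤ w (b + 1) * M + (B - w (b + 1)) * M := by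
          rw [hsplit]
          refine (norm_add_le _ _).trans (add_le_add ?_ hrest)
          rw [norm_smul, Real.norm_of_nonneg (hw₀ _ hlast)]
          exact mul_le_mul_of_nonneg_left (hz _) (hw₀ _ hlast)
      _ = B * M := by ring

lemma e_add (s t : ℝ) : e (s + t) = e s * e t := by
  simp only [e, Complex.ofReal_add, mul_add, Complex.exp_add]

lemma e_eq_exp_I_mul (t : ℝ) : e t = Complex.exp (Complex.I * (2 * π * t : ℝ)) := by
  rw [e]; push_cast; ring_nf

lemma norm_e (t : ℝ) : ‖e t‖ = 1 := by
  rw [e_eq_exp_I_mul, mul_comm, Complex.norm_exp_ofReal_mul_I]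

lemma four_mul_abs_le_norm_e_sub_one {α : ℝ} (hα : |α| ≤ 1 / 2) : 4 * |α| ≤ ‖e α - 1‖ := by
  have hπα : |π * α| ≤ π / 2 := by
    rw [abs_mul, abs_of_pos pi_pos]; nlinarith [pi_pos]
  have hjordan := mul_abs_le_abs_sin hπα
  rw [abs_mul, abs_of_pos pi_pos] at hjordan
  rw [e_eq_exp_I_mul, Complex.norm_exp_I_mul_ofReal_sub_one, norm_mul, Real.norm_two,
    Real.norm_eq_abs, show 2 * π * α / 2 = π * α by ring]
  have : 2 / π * (π * |α|) = 2 * |α| := by field_simp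
  linarith

lemma e_sub_one_mul_sum_Ioc (α : ℝ) {a n : ℤ} (h : a ≤ n) :
    (e α - 1) * ∑ m ∈ Finset.Ioc a n, e (m * α) = e ((n + 1) * α) - e ((a + 1) * α) := by
  induction n, h using Int.leInduction with
  | base => simp
  | succ n h ih =>
    rw [Finset.sum_Ioc_add_one_right h, mul_add, ih, Int.cast_add, Int.cast_one,
      show ((n : ℝ) + 1 + 1) * α = (n + 1) * α + α by ring, e_add]
    ring

theorem norm_sum_Ioc_e_le {α : ℝ} (hα₀ : 0 < |α|) (hα : |α| ≤ 1 / 2) (a n : ℤ) :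
    ‖∑ m ∈ Finset.Ioc a n, e (m * α)‖ ≤ 1 / (2 * |α|) := by
  rcases lt_or_ge n a with hna | han
  · simp [Finset.Ioc_eq_empty_of_le hna.le]
  have hnum : ‖e α - 1‖ * ‖∑ m ∈ Finset.Ioc a n, e (m * α)‖ ≤ 2 := by
    rw [← norm_mul, e_sub_one_mul_sum_Ioc α han]
    exact (norm_sub_le _ _).trans (by rw [norm_e, norm_e]; norm_num)
  have hden := four_mul_abs_le_norm_e_sub_one hα
  rw [le_div_iff₀ (by positivity)]
  nlinarith [norm_nonneg (∑ m ∈ Finset.Ioc a n, e (m * α))]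

theorem norm_sum_Ioc_mul_e_le {α B : ℝ} (hα₀ : 0 < |α|) (hα : |α| ≤ 1 / 2) {a b : ℤ}
    {w : ℤ → ℝ} (hw₀ : ∀ m ∈ Finset.Ioc a b, 0 ≤ w m) (hwB : ∀ m ∈ Finset.Ioc a b, w m ≤ B)
    (hw : AntitoneOn w (Finset.Ioc a b)) (hB : 0 ≤ B) :
    ‖∑ m ∈ Finset.Ioc a b, (w m : ℂ) * e (m * α)‖ ≤ B / (2 * |α|) := by
  simp_rw [← Complex.real_smul, div_eq_mul_one_div B]
  exact norm_sum_Ioc_smul_le_of_antitoneOn hw₀ hwB hw hB (norm_sum_Ioc_e_le hα₀ hα a)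

section Phase

variable {c θ : ℝ}

lemma phaseWeight_nonneg {u : ℝ} (hu : 0 ≤ u) (hc : 0 ≤ c) (hθ : 1 ≤ θ)
    (hT : 1 ≤ tan (log u)) : 0 ≤ phaseWeight c θ u := by
  rw [phaseWeight_eq (zero_lt_one.trans_le hT).ne']
  exact div_nonneg (rpow_nonneg hu _) (zero_le_one.trans (one_le_phaseDenom hc hθ hT))

lemma phaseWeight_le_rpow {u : ℝ} (hu : 0 ≤ u) (hc : 0 ≤ c) (hθ : 1 ≤ θ)
    (hT : 1 ≤ tan (log u)) : phaseWeight c θ u ≤ u ^ (1 - c) := by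
  rw [phaseWeight_eq (zero_lt_one.trans_le hT).ne']
  exact div_le_self (rpow_nonneg hu _) (one_le_phaseDenom hc hθ hT)

lemma antitoneOn_phaseWeight {s : Set ℝ} (hs : s ⊆ Set.Ioi 0) (hc : 1 ≤ c) (hθ : 1 ≤ θ)
    (hmono : MonotoneOn (fun u => tan (log u)) s) (hT : ∀ u ∈ s, 1 ≤ tan (log u)) :
    AntitoneOn (phaseWeight c θ) s := by
  intro u hu v hv huv
  have hu₀ : 0 < u := hs hu
  rw [phaseWeight_eq (zero_lt_one.trans_le (hT u hu)).ne',
    phaseWeight_eq (zero_lt_one.trans_le (hT v hv)).ne']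
  exact div_le_div₀ (rpow_nonneg hu₀.le _) (rpow_le_rpow_of_nonpos hu₀ huv (by linarith))
    (zero_lt_one.trans_le (one_le_phaseDenom (by linarith) hθ (hT u hu)))
    (phaseDenom_le_phaseDenom (by linarith) hθ (by linarith [hT u hu]) (hmono hu hv huv))

lemma strictMonoOn_phase {s : Set ℝ} (hs : s ⊆ Set.Ioi 0) (hc : 0 < c) (hθ : 0 ≤ θ)
    (hmono : MonotoneOn (fun u => tan (log u)) s) (hT : ∀ u ∈ s, 1 ≤ tan (log u)) :
    StrictMonoOn (phase c θ) s := by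
  intro u hu v hv huv
  have hTu : 0 < tan (log u) := by linarith [hT u hu]
  exact mul_lt_mul (rpow_lt_rpow (hs hu).le huv hc)
    (rpow_le_rpow hTu.le (hmono hu hv huv.le) hθ) (rpow_pos_of_pos hTu _)
    (rpow_nonneg (hs hv).le _)

lemma monotoneOn_tan_log_Icc (k : ℤ) :
    MonotoneOn (fun u => tan (log u))
      (Set.Icc (exp (π * k + arctan 1)) (exp (π * k + arctan 2))) :=
  (monotoneOn_tan_Icc_add k (neg_pi_div_two_lt_arctan 1) (arctan_lt_pi_div_two 2)).comp
    (strictMonoOn_log.monotoneOn.mono fun _ hu => (exp_pos _).trans_le hu.1)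
    fun _ hu => log_mem_Icc_of_mem_Icc_exp hu

lemma one_le_tan_log_of_mem_Icc (k : ℤ) {u : ℝ}
    (hu : u ∈ Set.Icc (exp (π * k + arctan 1)) (exp (π * k + arctan 2))) : 1 ≤ tan (log u) :=
  one_le_tan_of_mem_Icc k (arctan_lt_pi_div_two 2) (arctan_one ▸ log_mem_Icc_of_mem_Icc_exp hu)

theorem norm_sum_phaseWeight_mul_e_le {Δ₁ Δ₂ A B α : ℝ} {y : ℝ → ℝ} (hΔ₁ : 0 < Δ₁)
    (hc : 1 ≤ c) (hθ : 1 ≤ θ) (hmono : MonotoneOn (fun u => tan (log u)) (Set.Icc Δ₁ Δ₂))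
    (hT : ∀ u ∈ Set.Icc Δ₁ Δ₂, 1 ≤ tan (log u))
    (hy : ∀ t ∈ Set.Icc A B, y t ∈ Set.Icc Δ₁ Δ₂ ∧ phase c θ (y t) = t)
    (hα₀ : 0 < |α|) (hα : |α| ≤ 1 / 2) :
    ‖∑ m ∈ Finset.Ioc ⌊A⌋ ⌊B⌋, (phaseWeight c θ (y m) : ℂ) * e (m * α)‖ ≤
      Δ₁ ^ (1 - c) / (2 * |α|) := by
  have hpos : Set.Icc Δ₁ Δ₂ ⊆ Set.Ioi 0 := fun u hu => hΔ₁.trans_le hu.1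
  have hcast : Set.MapsTo (fun m : ℤ => (m : ℝ)) (Finset.Ioc ⌊A⌋ ⌊B⌋) (Set.Icc A B) :=
    fun _ hm => Int.cast_mem_Icc_of_mem_Ioc_floor hm
  have hmem : ∀ m ∈ Finset.Ioc ⌊A⌋ ⌊B⌋, y m ∈ Set.Icc Δ₁ Δ₂ := fun m hm => (hy _ (hcast hm)).1
  have hy_mono : MonotoneOn y (Set.Icc A B) :=
    (strictMonoOn_phase hpos (by linarith) (by linarith) hmono hT).monotoneOn_of_leftInvOn
      (fun t ht => (hy t ht).1) (fun t ht => (hy t ht).2)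
  refine norm_sum_Ioc_mul_e_le hα₀ hα
    (fun m hm => phaseWeight_nonneg (hpos (hmem m hm)).le (by linarith) hθ (hT _ (hmem m hm)))
    (fun m hm => (phaseWeight_le_rpow (hpos (hmem m hm)).le (by linarith) hθ
      (hT _ (hmem m hm))).trans (rpow_le_rpow_of_nonpos hΔ₁ (hmem m hm).1 (by linarith)))
    ((antitoneOn_phaseWeight hpos hc hθ hmono hT).comp_MonotoneOn
      (hy_mono.comp (Int.cast_mono.monotoneOn _) hcast) fun _ hm => hmem _ hm)
    (rpow_nonneg hΔ₁.le _)

lemma le_exp_pi_mul_exp_floor {X a : ℝ} (hX : 0 < X) (ha : 0 ≤ a) :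
    X ≤ exp π * exp (π * ⌊log X / π⌋ + a) := by
  have hfloor : π * (log X / π - 1) < π * ⌊log X / π⌋ :=
    mul_lt_mul_of_pos_left (Int.sub_one_lt_floor _) pi_pos
  rw [mul_sub, mul_div_cancel₀ _ pi_pos.ne', mul_one] at hfloor
  calc X = exp (log X) := (exp_log hX).symm
    _ ≤ exp (π + (π * ⌊log X / π⌋ + a)) := exp_le_exp.2 (by linarith)
    _ = exp π * exp (π * ⌊log X / π⌋ + a) := exp_add _ _

lemma rpow_one_sub_div_le {X Δ ε α : ℝ} (hX : 0 < X) (hΔ : X ≤ exp π * Δ) (hc : 1 ≤ c)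
    (hα : X ^ (1 - c - ε) ≤ |α|) : Δ ^ (1 - c) / (2 * |α|) ≤ exp (π * (c - 1)) * X ^ ε := by
  have hΔ' : X / exp π ≤ Δ := by rw [div_le_iff₀' (exp_pos π)]; exact hΔ
  calc Δ ^ (1 - c) / (2 * |α|) ≤ (X / exp π) ^ (1 - c) / X ^ (1 - c - ε) := by
        gcongr ?_ / ?_
        · exact rpow_le_rpow_of_nonpos (by positivity) hΔ' (by linarith)
        · linarith [(rpow_pos_of_pos hX (1 - c - ε)).le]
    _ = exp (π * (c - 1)) * X ^ ε := by
        rw [div_rpow hX.le (exp_pos π).le, ← exp_mul, div_div, mul_comm (exp _),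
          ← div_div, ← rpow_sub hX, div_eq_mul_inv, ← exp_neg]
        ring_nf

end Phase

lemma setIntegral_le_of_subset_Icc {s : Set ℝ} {f : ℝ → ℝ} {a b K : ℝ}
    (hs : s ⊆ Set.Icc a b) (hab : b - a ≤ 1) (hK : 0 ≤ K) (hf : ∀ x ∈ s, |f x| ≤ K) :
    ∫ x in s, f x ≤ K := by
  have hfin : volume (Set.Icc a b) < ⊤ := measure_Icc_lt_top
  have hvol : volume.real s ≤ 1 :=
    (measureReal_mono hs hfin.ne).trans (by rw [Real.volume_real_Icc]; exact max_le hab zero_le_one)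
  calc ∫ x in s, f x ≤ ‖∫ x in s, f x‖ := Real.le_norm_self _
    _ ≤ K * volume.real s :=
        norm_setIntegral_le_of_norm_le_const ((measure_mono hs).trans_lt hfin) hf
    _ ≤ K := mul_le_of_le_one_right hK hvol

theorem Theta_cube_tail_general (c θ ε : ℝ) (hc : 1 < c) (hc' : c < 23 / 21) (hθ : 1 < θ)
    (hε' : ε < 1 / 100) :
    ∃ ε' : ℝ, 0 < ε' ∧
      ∃ C X₀ : ℝ, 0 < C ∧
        ∀ X : ℝ, X₀ ≤ X →
          let Δ₁ := Real.exp (Real.pi * (⌊Real.log X / Real.pi⌋ : ℝ) + Real.arctan 1)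
          let Δ₂ := Real.exp (Real.pi * (⌊Real.log X / Real.pi⌋ : ℝ) + Real.arctan 2)
          let N₁ := Δ₁ ^ c
          let N := 2 ^ θ * Δ₂ ^ c
          let τ := X ^ (1 - c - ε)
          ∀ y : ℝ → ℝ,
            (∀ t ∈ Set.Icc N₁ N,
              y t ∈ Set.Icc Δ₁ Δ₂ ∧ (y t) ^ c * Real.tan (Real.log (y t)) ^ θ = t) →
            let w : ℤ → ℝ := fun m =>
              (y m) ^ (1 - c) /
                ((c * Real.tan (Real.log (y m)) + θ * ((Real.cos (Real.log (y m)))⁻¹) ^ 2) *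
                  Real.tan (Real.log (y m)) ^ (θ - 1))
            let Θ : ℝ → ℂ := fun α =>
              ∑ m ∈ Finset.Ioc ⌊N₁⌋ ⌊N⌋, (w m : ℂ) * e ((m : ℝ) * α)
            (∫ α in {α : ℝ | τ ≤ |α| ∧ |α| ≤ 1 / 2}, ‖Θ α‖ ^ 3) ≤
              C * X ^ (3 - c - ε') := by
  refine ⟨3 - c - 3 * ε, by linarith, exp (π * (c - 1)) ^ 3, 1, by positivity, ?_⟩
  intro X hX Δ₁ Δ₂ N₁ N τ y hy w Θ
  have hX₀ : 0 < X := one_pos.trans_le hX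
  have hΔ₁ : X ≤ exp π * Δ₁ := le_exp_pi_mul_exp_floor hX₀ (arctan_one ▸ by positivity)
  have hΘ : ∀ α ∈ {α : ℝ | τ ≤ |α| ∧ |α| ≤ 1 / 2}, ‖Θ α‖ ≤ exp (π * (c - 1)) * X ^ ε :=
    fun α hα => (norm_sum_phaseWeight_mul_e_le (exp_pos _) hc.le hθ.le
      (monotoneOn_tan_log_Icc _) (fun _ => one_le_tan_log_of_mem_Icc _) hy
      ((rpow_pos_of_pos hX₀ _).trans_le hα.1) hα.2).trans (rpow_one_sub_div_le hX₀ hΔ₁ hc.le hα.1)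
  calc (∫ α in {α : ℝ | τ ≤ |α| ∧ |α| ≤ 1 / 2}, ‖Θ α‖ ^ 3)
      ≤ (exp (π * (c - 1)) * X ^ ε) ^ 3 :=
        setIntegral_le_of_subset_Icc (fun α hα => abs_le.1 hα.2) (by norm_num) (by positivity)
          fun α hα => by
            rw [abs_of_nonneg (by positivity)]
            exact pow_le_pow_left₀ (norm_nonneg _) (hΘ α hα) 3
    _ = exp (π * (c - 1)) ^ 3 * X ^ (3 - c - (3 - c - 3 * ε)) := by
        rw [mul_pow, ← rpow_mul_natCast hX₀.le]
        ring_nf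

theorem Theta_cube_tail (c θ ε : ℝ) (hc : 1 < c) (hc' : c < 23 / 21) (hθ : 1 < θ)
    (hε : 0 < ε) (hε' : ε < 1 / 100) :
    ∃ ε' : ℝ, 0 < ε' ∧
      ∃ C X₀ : ℝ, 0 < C ∧
        ∀ X : ℝ, X₀ ≤ X →
          let Δ₁ := Real.exp (Real.pi * (⌊Real.log X / Real.pi⌋ : ℝ) + Real.arctan 1)
          let Δ₂ := Real.exp (Real.pi * (⌊Real.log X / Real.pi⌋ : ℝ) + Real.arctan 2)
          let N₁ := Δ₁ ^ c
          let N := 2 ^ θ * Δ₂ ^ c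
          let τ := X ^ (1 - c - ε)
          ∀ y : ℝ → ℝ,
            (∀ t ∈ Set.Icc N₁ N,
              y t ∈ Set.Icc Δ₁ Δ₂ ∧ (y t) ^ c * Real.tan (Real.log (y t)) ^ θ = t) →
            let w : ℤ → ℝ := fun m =>
              (y m) ^ (1 - c) /
                ((c * Real.tan (Real.log (y m)) + θ * ((Real.cos (Real.log (y m)))⁻¹) ^ 2) *
                  Real.tan (Real.log (y m)) ^ (θ - 1))
            let Θ : ℝ → ℂ := fun α =>
              ∑ m ∈ Finset.Ioc ⌊N₁⌋ ⌊N⌋, (w m : ℂ) * e ((m : ℝ) * α)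
            (∫ α in {α : ℝ | τ ≤ |α| ∧ |α| ≤ 1 / 2}, ‖Θ α‖ ^ 3) ≤
              C * X ^ (3 - c - ε') :=
  Theta_cube_tail_general c θ ε hc hc' hθ hε'
end
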